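/- arXiv:1704.07336 — 2 statements merged into one kernel-verified Lean document; each statement's English description precedes it below -/
import Mathlib

section
/- With notation as above (Q1(x) = Σ_i x_i dτ(Y_i), T(k) := Σ_{i=1}^3 dτ(Y_i) Q1(x)^k dτ(Y_i)), the identity Σ_{i=1}^3 [dτ(Y_i), Q1(x)] Q1(x)^k [dτ(Y_i), Q1(x)] = |x|² T(k) − Q1(x)^{k+2} holds for every nonnegative integer k and every x ∈ R³. -/
/-!
By the bracket relations, `[A i, Q1 A x]` is the `i`-th component of the cross product `x × A`.
The identity is then Lagrange's `Σ (x × a)ᵢ m (x × a)ᵢ = |x|² Σ aᵢ m aᵢ - (x · a) m (x · a)`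
for `m = Q1 A x ^ k`; its proof only moves the scalars `xᵢ`, so the `aᵢ` and `m` need not commute.
-/

/-- The matrix-valued polynomial `Q1(x) = Σ_i x_i dτ(Y_i)`, where `A i = dτ(Y_i)`. -/
noncomputable def Q1 {d : ℕ} (A : Fin 3 → Matrix (Fin d) (Fin d) ℂ) (x : Fin 3 → ℝ) :
    Matrix (Fin d) (Fin d) ℂ :=
  ∑ i : Fin 3, (x i : ℂ) • A i

/-- `T(k) = Σ_i dτ(Y_i) Q1(x)^k dτ(Y_i)`. -/
noncomputable def T {d : ℕ} (A : Fin 3 → Matrix (Fin d) (Fin d) ℂ) (x : Fin 3 → ℝ)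
    (k : ℕ) : Matrix (Fin d) (Fin d) ℂ :=
  ∑ i : Fin 3, A i * Q1 A x ^ k * A i

theorem commutator_smul_add_smul_add_smul {K R : Type*} [CommRing K] [Ring R] [Algebra K R]
    {a b c : R} (hab : a * b - b * a = c) (hca : c * a - a * c = b) (x y z : K) :
    a * (x • a + y • b + z • c) - (x • a + y • b + z • c) * a = y • c - z • b := by
  calc _ = y • (a * b - b * a) - z • (c * a - a * c) := by
        simp only [mul_add, add_mul, mul_smul_comm, smul_mul_assoc]
        module
    _ = y • c - z • b := by rw [hab, hca]

theorem sum_cross_mul_mul_cross {K R : Type*} [CommRing K] [Ring R] [Algebra K R]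
    (x y z : K) (a b c m : R) :
    (y • c - z • b) * m * (y • c - z • b) + (z • a - x • c) * m * (z • a - x • c) +
        (x • b - y • a) * m * (x • b - y • a) =
      (x ^ 2 + y ^ 2 + z ^ 2) • (a * m * a + b * m * b + c * m * c) -
        (x • a + y • b + z • c) * m * (x • a + y • b + z • c) := by
  simp only [mul_add, add_mul, sub_mul, mul_sub, smul_mul_assoc, mul_smul_comm]
  module

/-- `Σ_i [dτ(Y_i), Q1(x)] Q1(x)^k [dτ(Y_i), Q1(x)] = |x|² T(k) − Q1(x)^{k+2}`. -/
theorem stmt12 {d : ℕ} (A : Fin 3 → Matrix (Fin d) (Fin d) ℂ)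
    (h01 : A 0 * A 1 - A 1 * A 0 = A 2)
    (h12 : A 1 * A 2 - A 2 * A 1 = A 0)
    (h20 : A 2 * A 0 - A 0 * A 2 = A 1)
    (k : ℕ) (x : Fin 3 → ℝ) :
    ∑ i : Fin 3,
        (A i * Q1 A x - Q1 A x * A i) * Q1 A x ^ k * (A i * Q1 A x - Q1 A x * A i) =
      ((x 0 ^ 2 + x 1 ^ 2 + x 2 ^ 2 : ℝ) : ℂ) • T A x k - Q1 A x ^ (k + 2) := by
  have hQ : Q1 A x = (x 0 : ℂ) • A 0 + (x 1 : ℂ) • A 1 + (x 2 : ℂ) • A 2 := Fin.sum_univ_three _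
  have h0 : A 0 * Q1 A x - Q1 A x * A 0 = (x 1 : ℂ) • A 2 - (x 2 : ℂ) • A 1 := by
    rw [hQ]
    exact commutator_smul_add_smul_add_smul h01 h20 _ _ _
  have h1 : A 1 * Q1 A x - Q1 A x * A 1 = (x 2 : ℂ) • A 0 - (x 0 : ℂ) • A 2 := by
    rw [hQ, add_rotate]
    exact commutator_smul_add_smul_add_smul h12 h01 _ _ _
  have h2 : A 2 * Q1 A x - Q1 A x * A 2 = (x 0 : ℂ) • A 1 - (x 1 : ℂ) • A 0 := by
    rw [hQ, add_comm, ← add_assoc]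
    exact commutator_smul_add_smul_add_smul h20 h12 _ _ _
  rw [Fin.sum_univ_three, h0, h1, h2, sum_cross_mul_mul_cross, ← hQ, T, Fin.sum_univ_three,
    ← pow_succ', ← pow_succ]
  push_cast
  rfl
end

section
/- Define T(k) := Σ_{i=1}^3 dτ(Y_i) Q1^k dτ(Y_i), where Q1 = Q1(x) = Σ_i x_i dτ(Y_i), for a representation dτ of so(3). Then T satisfies the recursion T(k+2) − Q1 T(k+1) − T(k+1) Q1 + Q1 T(k) Q1 = −|x|² T(k) + Q1^{k+2} for all k ≥ 0. -/
/-!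
Writing `Q = Q1(x)` and `D_i = A_i Q - Q A_i`, the left-hand side is the noncommutative ring
identity `-Σ_i D_i Q^k D_i`. The so(3) relations turn `D_i` into the `i`-th component of the cross
product `x × A`, and Lagrange's identity `|x × a|² = |x|² |a|² - (x · a)²`, with the two factors of
each product kept apart by `Q^k`, gives `-|x|² T(k) + Q Q^k Q`.
-/

open Finset

section Recursion

variable {R : Type*} [Ring R] {ι : Type*} [Fintype ι]

theorem sum_mul_pow_mul_recursion (a : ι → R) (c : R) (k : ℕ) :
    ∑ i, a i * c ^ (k + 2) * a i - c * ∑ i, a i * c ^ (k + 1) * a i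
        - (∑ i, a i * c ^ (k + 1) * a i) * c + c * (∑ i, a i * c ^ k * a i) * c =
      -∑ i, (a i * c - c * a i) * c ^ k * (a i * c - c * a i) := by
  simp only [mul_sum, sum_mul, ← sum_sub_distrib, ← sum_add_distrib, ← sum_neg_distrib]
  refine sum_congr rfl fun i _ => ?_
  rw [pow_succ, pow_succ]
  nth_rewrite 1 3 [← (Commute.self_pow c k).eq]
  noncomm_ring

end Recursion

section Cross

variable {S R : Type*} [CommRing S] [Ring R] [Algebra S R]

def vecCross (x : Fin 3 → S) (a : Fin 3 → R) : Fin 3 → R :=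
  ![x 1 • a 2 - x 2 • a 1, x 2 • a 0 - x 0 • a 2, x 0 • a 1 - x 1 • a 0]

theorem mul_sum_smul_sub_sum_smul_mul_eq_vecCross (a : Fin 3 → R)
    (h01 : a 0 * a 1 - a 1 * a 0 = a 2) (h12 : a 1 * a 2 - a 2 * a 1 = a 0)
    (h20 : a 2 * a 0 - a 0 * a 2 = a 1) (x : Fin 3 → S) (i : Fin 3) :
    a i * ∑ j, x j • a j - (∑ j, x j • a j) * a i = vecCross x a i := by
  have h : a i * ∑ j, x j • a j - (∑ j, x j • a j) * a i
      = ∑ j, x j • (a i * a j - a j * a i) := by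
    simp only [mul_sum, sum_mul, ← sum_sub_distrib, mul_smul_comm, smul_mul_assoc, smul_sub]
  rw [h, Fin.sum_univ_three]
  have h10 : a 1 * a 0 - a 0 * a 1 = -a 2 := by rw [← h01, neg_sub]
  have h21 : a 2 * a 1 - a 1 * a 2 = -a 0 := by rw [← h12, neg_sub]
  have h02 : a 0 * a 2 - a 2 * a 0 = -a 1 := by rw [← h20, neg_sub]
  fin_cases i <;>
    simp only [Fin.zero_eta, Fin.mk_one, Fin.reduceFinMk, vecCross, Matrix.cons_val, sub_self,
      smul_zero, smul_neg, h01, h12, h20, h10, h21, h02] <;>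
    abel

theorem sum_vecCross_mul_mul_vecCross (x : Fin 3 → S) (a : Fin 3 → R) (p : R) :
    ∑ i, vecCross x a i * p * vecCross x a i =
      (∑ i, x i ^ 2) • ∑ i, a i * p * a i - (∑ i, x i • a i) * p * ∑ i, x i • a i := by
  simp only [Fin.sum_univ_three, vecCross, Matrix.cons_val_zero, Matrix.cons_val_one,
    Matrix.cons_val_two, Matrix.head_cons, Matrix.tail_cons]
  simp only [sub_mul, mul_sub, add_mul, mul_add, smul_mul_assoc, mul_smul_comm, smul_smul,
    smul_add, smul_sub]
  module

end Cross

/-- The recursion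
`T(k+2) − Q1 T(k+1) − T(k+1) Q1 + Q1 T(k) Q1 = −|x|² T(k) + Q1^{k+2}`. -/
theorem stmt13 {d : ℕ} (A : Fin 3 → Matrix (Fin d) (Fin d) ℂ)
    (h01 : A 0 * A 1 - A 1 * A 0 = A 2)
    (h12 : A 1 * A 2 - A 2 * A 1 = A 0)
    (h20 : A 2 * A 0 - A 0 * A 2 = A 1)
    (k : ℕ) (x : Fin 3 → ℝ) :
    T A x (k + 2) - Q1 A x * T A x (k + 1) - T A x (k + 1) * Q1 A x +
        Q1 A x * T A x k * Q1 A x =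
      -(((x 0 ^ 2 + x 1 ^ 2 + x 2 ^ 2 : ℝ) : ℂ) • T A x k) + Q1 A x ^ (k + 2) := by
  have hQ : Q1 A x = ∑ i, (x i : ℂ) • A i := rfl
  have hnorm : ((x 0 ^ 2 + x 1 ^ 2 + x 2 ^ 2 : ℝ) : ℂ) = ∑ i, (x i : ℂ) ^ 2 := by
    simp [Fin.sum_univ_three]
  have hpow : Q1 A x ^ (k + 2) = Q1 A x * Q1 A x ^ k * Q1 A x := by
    rw [pow_succ, pow_succ', mul_assoc]
  simp only [T]
  rw [sum_mul_pow_mul_recursion, hQ]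
  simp only [mul_sum_smul_sub_sum_smul_mul_eq_vecCross A h01 h12 h20]
  rw [sum_vecCross_mul_mul_vecCross, ← hQ, hnorm, hpow, neg_sub, sub_eq_neg_add]
end
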